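/- Let Q = Σ_{i∈I} E_{i,σ(i)} be a strictly upper triangular n×n subpermutation matrix over F, and let A ∈ Q U_n. For a unit upper triangular matrix U = I + [u_{ij}], the conjugate U A U^{-1} lies in Q U_n if and only if every nonzero entry u_{ij} (i < j) has (i,j) in the set S_Q = {(i,j) ∈ I×I : i < j, σ(i) < σ(j)} ∪ {(i,j) : i < j, j ∉ I}. -/

import Mathlib

/-!
Write `A = Q V`. Since `U_n` is a group, `U A U⁻¹ = (U Q) (V U⁻¹)` lies in `Q U_n` iff `U Q` does.
For injective `σ`, a matrix `X` lies in `Q U_n` iff its rows outside `I` vanish and, for `i ∈ I`,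
row `i` of `X` vanishes before column `σ i` and has a `1` there; the rows of the witness in `U_n`
are then read off from those of `X`. Column `σ j` of `U Q` is column `j` of `U` and the other
columns vanish, so this becomes a condition on the vanishing entries of `U`, which is the
condition defining `S_Q`.
-/

namespace Matrix

variable {m R : Type*}

section UnitUpperTriangular

variable [LinearOrder m]

def IsUnitUpperTriangular [Zero R] [One R] (M : Matrix m m R) : Prop :=
  M.IsUpperTriangular ∧ ∀ i, M i i = 1

theorem IsUpperTriangular.le_of_ne_zero [Zero R] {A : Matrix m m R} (hA : A.IsUpperTriangular)
    {i j : m} (hij : A i j ≠ 0) : i ≤ j :=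
  not_lt.mp fun h => hij (hA h)

theorem IsUpperTriangular.forall_apply_eq_zero_iff_forall_ne_zero [Zero R] {I : Finset m}
    {σ : m → m} (hσ : Set.InjOn σ I) {U : Matrix m m R} (hU : U.IsUpperTriangular) :
    ((∀ i ∉ I, ∀ j ∈ I, U i j = 0) ∧ ∀ i ∈ I, ∀ j ∈ I, σ j < σ i → U i j = 0) ↔
      ∀ i j, i < j → U i j ≠ 0 → (i ∈ I ∧ j ∈ I ∧ σ i < σ j) ∨ j ∉ I := by
  constructor
  · rintro ⟨hout, hin⟩ i j hij hUij
    by_cases hj : j ∈ I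
    · have hi : i ∈ I := by_contra fun hi => hUij (hout i hi j hj)
      refine Or.inl ⟨hi, hj, lt_of_not_ge fun hle => hUij (hin i hi j hj (hle.lt_of_ne ?_))⟩
      exact fun h => hij.ne (hσ hi hj h.symm)
    · exact Or.inr hj
  · intro h
    have hsupp : ∀ i, ∀ j ∈ I, i ≠ j → U i j ≠ 0 → i ∈ I ∧ σ i < σ j := fun i j hj hne hUij => by
      simpa [hj] using h i j ((hU.le_of_ne_zero hUij).lt_of_ne hne) hUij
    refine ⟨fun i hi j hj => ?_, fun i hi j hj hlt => ?_⟩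
    · by_contra hUij
      exact hi (hsupp i j hj (fun h => hi (h ▸ hj)) hUij).1
    · by_contra hUij
      exact lt_asymm hlt (hsupp i j hj (fun h => (h ▸ hlt).false) hUij).2

variable [Fintype m]

theorem IsUpperTriangular.mul_apply_self [NonUnitalNonAssocSemiring R] {A B : Matrix m m R}
    (hA : A.IsUpperTriangular) (hB : B.IsUpperTriangular) (i : m) :
    (A * B) i i = A i i * B i i := by
  rw [mul_apply]
  refine Finset.sum_eq_single i (fun k _ hk => ?_) (by simp)
  rcases hk.lt_or_gt with h | h
  · rw [hA h, zero_mul]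
  · rw [hB h, mul_zero]

theorem IsUnitUpperTriangular.mul [NonAssocSemiring R] {A B : Matrix m m R}
    (hA : A.IsUnitUpperTriangular) (hB : B.IsUnitUpperTriangular) :
    (A * B).IsUnitUpperTriangular :=
  ⟨hA.1.mul hB.1, fun i => by rw [hA.1.mul_apply_self hB.1, hA.2, hB.2, one_mul]⟩

def unitUpperCoset [NonAssocSemiring R] (Q : Matrix m m R) : Set (Matrix m m R) :=
  {A | ∃ W : Matrix m m R, W.IsUnitUpperTriangular ∧ A = Q * W}

variable [CommRing R] {A : Matrix m m R}

theorem IsUnitUpperTriangular.isUnit_det (hA : A.IsUnitUpperTriangular) : IsUnit A.det := by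
  simp [det_of_isUpperTriangular hA.1, hA.2]

theorem IsUnitUpperTriangular.inv (hA : A.IsUnitUpperTriangular) :
    A⁻¹.IsUnitUpperTriangular := by
  have : Invertible A := invertibleOfIsUnitDet A hA.isUnit_det
  have hinv : A⁻¹.IsUpperTriangular := blockTriangular_inv_of_blockTriangular hA.1
  refine ⟨hinv, fun i => ?_⟩
  simpa [hA.2, mul_nonsing_inv A hA.isUnit_det] using (hA.1.mul_apply_self hinv i).symm

theorem mul_mem_unitUpperCoset_iff {Q X : Matrix m m R} (hA : A.IsUnitUpperTriangular) :
    X * A ∈ unitUpperCoset Q ↔ X ∈ unitUpperCoset Q := by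
  constructor
  · rintro ⟨W, hW, hXA⟩
    refine ⟨W * A⁻¹, hW.mul hA.inv, ?_⟩
    rw [← Matrix.mul_assoc, ← hXA, Matrix.mul_assoc, mul_nonsing_inv A hA.isUnit_det,
      Matrix.mul_one]
  · rintro ⟨W, hW, rfl⟩
    exact ⟨W * A, hW.mul hA, Matrix.mul_assoc _ _ _⟩

end UnitUpperTriangular

section Subpermutation

variable [Fintype m] [DecidableEq m] [NonAssocSemiring R] {I : Finset m} {σ : m → m}

def subpermutation (I : Finset m) (σ : m → m) : Matrix m m R :=
  of fun i j => if i ∈ I ∧ j = σ i then 1 else 0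

theorem subpermutation_mul_apply (W : Matrix m m R) (i k : m) :
    (subpermutation I σ * W :) i k = if i ∈ I then W (σ i) k else 0 := by
  by_cases hi : i ∈ I <;> simp [subpermutation, mul_apply, hi]

theorem mul_subpermutation_apply_of_mem (hσ : Set.InjOn σ I) (X : Matrix m m R) (i : m)
    {j : m} (hj : j ∈ I) : (X * subpermutation I σ :) i (σ j) = X i j := by
  rw [mul_apply, Finset.sum_eq_single j]
  · simp [subpermutation, hj]
  · intro j' _ hne
    simp only [subpermutation, of_apply, mul_ite, mul_one, mul_zero, ite_eq_right_iff, and_imp]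
    exact fun hj' heq => absurd (hσ hj' hj heq.symm) hne
  · simp

theorem mul_subpermutation_apply_of_forall_ne (X : Matrix m m R) (i : m) {k : m}
    (hk : ∀ j ∈ I, σ j ≠ k) : (X * subpermutation I σ :) i k = 0 :=
  Finset.sum_eq_zero fun j _ => by
    simp only [subpermutation, of_apply, mul_ite, mul_one, mul_zero, ite_eq_right_iff, and_imp]
    exact fun hj heq => absurd heq.symm (hk j hj)

theorem forall_mul_subpermutation_apply_eq_zero_iff (hσ : Set.InjOn σ I) (X : Matrix m m R)
    (i : m) (p : m → Prop) :
    (∀ k, p k → (X * subpermutation I σ :) i k = 0) ↔ ∀ j ∈ I, p (σ j) → X i j = 0 := by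
  refine ⟨fun h j hj hp => ?_, fun h k hk => ?_⟩
  · rw [← mul_subpermutation_apply_of_mem hσ X i hj]
    exact h _ hp
  · by_cases hkI : ∃ j ∈ I, σ j = k
    · obtain ⟨j, hj, rfl⟩ := hkI
      rw [mul_subpermutation_apply_of_mem hσ X i hj]
      exact h j hj hk
    · push Not at hkI
      exact mul_subpermutation_apply_of_forall_ne X i hkI

theorem transpose_subpermutation_mul_apply_of_mem (hσ : Set.InjOn σ I) (Y : Matrix m m R)
    {i : m} (hi : i ∈ I) (l : m) : ((subpermutation I σ)ᵀ * Y :) (σ i) l = Y i l := by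
  rw [mul_apply, Finset.sum_eq_single i]
  · simp [subpermutation, hi]
  · intro i' _ hne
    simp only [transpose_apply, subpermutation, of_apply, ite_mul, one_mul, zero_mul,
      ite_eq_right_iff, and_imp]
    exact fun hi' heq => absurd (hσ hi' hi heq.symm) hne
  · simp

theorem transpose_subpermutation_mul_apply_of_forall_ne (Y : Matrix m m R) {k : m}
    (hk : ∀ i ∈ I, σ i ≠ k) (l : m) : ((subpermutation I σ)ᵀ * Y :) k l = 0 :=
  Finset.sum_eq_zero fun i _ => by
    simp only [transpose_apply, subpermutation, of_apply, ite_mul, one_mul, zero_mul,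
      ite_eq_right_iff, and_imp]
    exact fun hi heq => absurd heq.symm (hk i hi)

end Subpermutation

section SubpermutationCoset

variable [Fintype m] [LinearOrder m] [NonAssocSemiring R] {I : Finset m} {σ : m → m}

theorem mem_unitUpperCoset_subpermutation_iff (hσ : Set.InjOn σ I) (X : Matrix m m R) :
    X ∈ unitUpperCoset (subpermutation I σ) ↔
      (∀ i ∉ I, ∀ k, X i k = 0) ∧ ∀ i ∈ I, X i (σ i) = 1 ∧ ∀ k < σ i, X i k = 0 := by
  constructor
  · rintro ⟨W, hW, rfl⟩
    simp only [subpermutation_mul_apply]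
    exact ⟨fun i hi k => if_neg hi, fun i hi => by simpa [hi] using ⟨hW.2 _, fun k hk => hW.1 hk⟩⟩
  · rintro ⟨hzero, hpivot⟩
    -- rows `σ i` of `W` are the rows `i` of `X`, the remaining rows are those of `1`
    set W := (subpermutation I σ)ᵀ * X + diagonal fun k => if k ∈ I.image σ then 0 else 1
      with hW
    have hW_image : ∀ i ∈ I, ∀ l, W (σ i) l = X i l := by
      intro i hi l
      rw [hW, add_apply, transpose_subpermutation_mul_apply_of_mem hσ X hi,
        diagonal_apply, if_pos (Finset.mem_image_of_mem σ hi), ite_self, add_zero]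
    have hW_low : ∀ k l, l ≤ k → W k l = (1 : Matrix m m R) k l := by
      intro k l hlk
      by_cases hk : ∃ i ∈ I, σ i = k
      · obtain ⟨i, hi, rfl⟩ := hk
        rw [hW_image i hi]
        rcases hlk.lt_or_eq with hlt | rfl
        · rw [(hpivot i hi).2 l hlt, one_apply_ne hlt.ne']
        · rw [(hpivot i hi).1, one_apply_eq]
      · push Not at hk
        have hk' : k ∉ I.image σ := by simpa using hk
        rw [hW, add_apply, transpose_subpermutation_mul_apply_of_forall_ne X hk, zero_add,
          diagonal_apply, if_neg hk', one_apply]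
    refine ⟨W, ⟨fun k l hlk => (hW_low k l hlk.le).trans (one_apply_ne hlk.ne'),
      fun k => (hW_low k k le_rfl).trans (one_apply_eq k)⟩, ?_⟩
    ext i k
    rw [subpermutation_mul_apply]
    split_ifs with hi
    · exact (hW_image i hi k).symm
    · exact hzero i hi k

theorem mul_subpermutation_mem_unitUpperCoset_iff (hσ : Set.InjOn σ I) {U : Matrix m m R}
    (hU : ∀ i, U i i = 1) :
    U * subpermutation I σ ∈ unitUpperCoset (subpermutation I σ) ↔
      (∀ i ∉ I, ∀ j ∈ I, U i j = 0) ∧ ∀ i ∈ I, ∀ j ∈ I, σ j < σ i → U i j = 0 := by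
  rw [mem_unitUpperCoset_subpermutation_iff hσ]
  refine and_congr (forall₂_congr fun i _ => ?_) (forall₂_congr fun i hi => ?_)
  · simpa using forall_mul_subpermutation_apply_eq_zero_iff hσ U i (fun _ => True)
  · rw [mul_subpermutation_apply_of_mem hσ U i hi, hU, eq_self_iff_true, true_and]
    exact forall_mul_subpermutation_apply_eq_zero_iff hσ U i (· < σ i)

end SubpermutationCoset

end Matrix

open Matrix

theorem conj_mem_coset_iff_SQ_general {F : Type*} [Field F] {n : ℕ}
    (I : Finset (Fin n)) (σ : Fin n → Fin n)
    (hσ : Set.InjOn σ ↑I)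
    (Q : Matrix (Fin n) (Fin n) F)
    (hQ : ∀ i j : Fin n, Q i j = if i ∈ I ∧ j = σ i then 1 else 0)
    (A V : Matrix (Fin n) (Fin n) F)
    (hVut : ∀ i j : Fin n, j < i → V i j = 0) (hVdiag : ∀ i : Fin n, V i i = 1)
    (hA : A = Q * V)
    (U : Matrix (Fin n) (Fin n) F)
    (hUut : ∀ i j : Fin n, j < i → U i j = 0) (hUdiag : ∀ i : Fin n, U i i = 1) :
    (∃ W : Matrix (Fin n) (Fin n) F,
        (∀ i j : Fin n, j < i → W i j = 0) ∧ (∀ i : Fin n, W i i = 1) ∧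
        U * A * U⁻¹ = Q * W) ↔
    (∀ i j : Fin n, i < j → U i j ≠ 0 →
      ((i ∈ I ∧ j ∈ I ∧ σ i < σ j) ∨ j ∉ I)) := by
  obtain rfl : Q = subpermutation I σ := ext hQ
  have hU : U.IsUnitUpperTriangular := ⟨fun i j h => hUut i j h, hUdiag⟩
  have hV : V.IsUnitUpperTriangular := ⟨fun i j h => hVut i j h, hVdiag⟩
  have hconj : U * A * U⁻¹ * (U * V⁻¹) = U * subpermutation I σ := by
    rw [hA, Matrix.mul_assoc, ← Matrix.mul_assoc U⁻¹, nonsing_inv_mul U hU.isUnit_det,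
      Matrix.one_mul, Matrix.mul_assoc, Matrix.mul_assoc, mul_nonsing_inv V hV.isUnit_det,
      Matrix.mul_one]
  calc _ ↔ U * A * U⁻¹ ∈ unitUpperCoset (subpermutation I σ) := by
        exact exists_congr fun W => and_assoc.symm
    _ ↔ U * subpermutation I σ ∈ unitUpperCoset (subpermutation I σ) := by
        rw [← mul_mem_unitUpperCoset_iff (hU.mul hV.inv), hconj]
    _ ↔ _ := (mul_subpermutation_mem_unitUpperCoset_iff hσ hUdiag).trans
        (hU.1.forall_apply_eq_zero_iff_forall_ne_zero hσ)

/-- for A ∈ Q·U_n, the conjugate U A U⁻¹ stays in Q·U_n iff all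
nonzero strictly upper entries of U lie in the set S_Q. -/
theorem conj_mem_coset_iff_SQ {F : Type*} [Field F] {n : ℕ}
    (I : Finset (Fin n)) (σ : Fin n → Fin n)
    (hσi : ∀ i ∈ I, i < σ i) (hσ : Set.InjOn σ ↑I)
    (Q : Matrix (Fin n) (Fin n) F)
    (hQ : ∀ i j : Fin n, Q i j = if i ∈ I ∧ j = σ i then 1 else 0)
    (A V : Matrix (Fin n) (Fin n) F)
    (hVut : ∀ i j : Fin n, j < i → V i j = 0) (hVdiag : ∀ i : Fin n, V i i = 1)
    (hA : A = Q * V)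
    (U : Matrix (Fin n) (Fin n) F)
    (hUut : ∀ i j : Fin n, j < i → U i j = 0) (hUdiag : ∀ i : Fin n, U i i = 1) :
    (∃ W : Matrix (Fin n) (Fin n) F,
        (∀ i j : Fin n, j < i → W i j = 0) ∧ (∀ i : Fin n, W i i = 1) ∧
        U * A * U⁻¹ = Q * W) ↔
    (∀ i j : Fin n, i < j → U i j ≠ 0 →
      ((i ∈ I ∧ j ∈ I ∧ σ i < σ j) ∨ j ∉ I)) :=
  conj_mem_coset_iff_SQ_general I σ hσ Q hQ A V hVut hVdiag hA U hUut hUdiag
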